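/- arXiv:math/0503712 — 4 statements merged into one kernel-verified Lean document; each statement's English description precedes it below -/
import Mathlib

section
/- Generalised Euler angle decomposition: for 1 ≤ i < j ≤ 3 and θ ∈ ℝ, let A_{ij}(θ) be the 3×3 matrix with (i,i) and (j,j) entries cos θ, (i,j) entry −sin θ, (j,i) entry sin θ, all other diagonal entries 1, and all other entries 0. Then every 3×3 real matrix A with AᵀA = I and det A = 1 can be written as A = A₁₂(θ₁₂) A₁₃(θ₁₃) A₂₃(θ₂₃) for some angles θ₁₂, θ₂₃ ∈ (−π, π] and θ₁₃ ∈ [−π/2, π/2]. -/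
/-! The first column of a rotation `A` is a unit vector, so in spherical coordinates it is the
first column of `A₁₂(a) A₁₃(b)` with `b = arcsin (A 2 0) ∈ [-π/2, π/2]`. Then
`(A₁₂(a) A₁₃(b))ᵀ A` is a rotation fixing the first basis vector, hence a plane rotation
`A₂₃(c)`. -/

open Matrix Real

/-- Elementary rotation in the (1,2)-plane of `ℝ³`. -/
noncomputable def elemRot12 (θ : ℝ) : Matrix (Fin 3) (Fin 3) ℝ :=
  !![Real.cos θ, -Real.sin θ, 0; Real.sin θ, Real.cos θ, 0; 0, 0, 1]

/-- Elementary rotation in the (1,3)-plane of `ℝ³`. -/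
noncomputable def elemRot13 (θ : ℝ) : Matrix (Fin 3) (Fin 3) ℝ :=
  !![Real.cos θ, 0, -Real.sin θ; 0, 1, 0; Real.sin θ, 0, Real.cos θ]

/-- Elementary rotation in the (2,3)-plane of `ℝ³`. -/
noncomputable def elemRot23 (θ : ℝ) : Matrix (Fin 3) (Fin 3) ℝ :=
  !![1, 0, 0; 0, Real.cos θ, -Real.sin θ; 0, Real.sin θ, Real.cos θ]

lemma exists_polar_coords (x y : ℝ) :
    ∃ θ ∈ Set.Ioc (-π) π, √(x ^ 2 + y ^ 2) * cos θ = x ∧ √(x ^ 2 + y ^ 2) * sin θ = y := by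
  have hnorm : ‖(⟨x, y⟩ : ℂ)‖ = √(x ^ 2 + y ^ 2) := by
    rw [Complex.norm_def, Complex.normSq_mk, sq, sq]
  exact ⟨Complex.arg ⟨x, y⟩, Complex.arg_mem_Ioc _,
    hnorm ▸ Complex.norm_mul_cos_arg _, hnorm ▸ Complex.norm_mul_sin_arg _⟩

lemma exists_spherical_coords {x y z : ℝ} (h : x ^ 2 + y ^ 2 + z ^ 2 = 1) :
    ∃ a ∈ Set.Ioc (-π) π, ∃ b ∈ Set.Icc (-(π / 2)) (π / 2),
      cos a * cos b = x ∧ sin a * cos b = y ∧ sin b = z := by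
  obtain ⟨a, ha, hx, hy⟩ := exists_polar_coords x y
  obtain ⟨hz₁, hz₂⟩ := abs_le.mp ((sq_le_one_iff_abs_le_one z).mp (by nlinarith))
  have hcos : cos (arcsin z) = √(x ^ 2 + y ^ 2) := by
    rw [cos_arcsin, ← h, add_sub_cancel_right]
  refine ⟨a, ha, arcsin z, arcsin_mem_Icc z, ?_, ?_, sin_arcsin hz₁ hz₂⟩
  · rw [hcos, mul_comm, hx]
  · rw [hcos, mul_comm, hy]

lemma elemRot12_mul_transpose_self (θ : ℝ) : elemRot12 θ * (elemRot12 θ)ᵀ = 1 := by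
  ext i j
  fin_cases i <;> fin_cases j <;>
    simp [elemRot12, mul_apply, Fin.sum_univ_three, one_apply, ← sq, mul_comm]

lemma elemRot13_mul_transpose_self (θ : ℝ) : elemRot13 θ * (elemRot13 θ)ᵀ = 1 := by
  ext i j
  fin_cases i <;> fin_cases j <;>
    simp [elemRot13, mul_apply, Fin.sum_univ_three, one_apply, ← sq, mul_comm]

lemma det_elemRot12 (θ : ℝ) : (elemRot12 θ).det = 1 := by
  simp [elemRot12, det_fin_three, ← sq]

lemma det_elemRot13 (θ : ℝ) : (elemRot13 θ).det = 1 := by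
  simp [elemRot13, det_fin_three, ← sq]

lemma exists_eq_elemRot23 {B : Matrix (Fin 3) (Fin 3) ℝ} (hB : Bᵀ * B = 1) (hdet : B.det = 1)
    (h00 : B 0 0 = 1) : ∃ θ ∈ Set.Ioc (-π) π, B = elemRot23 θ := by
  have hB' : B * Bᵀ = 1 := mul_eq_one_comm.mp hB
  have col0 := congrFun (congrFun hB 0) 0
  have col1 := congrFun (congrFun hB 1) 1
  have col2 := congrFun (congrFun hB 2) 2
  have col12 := congrFun (congrFun hB 1) 2
  have row0 := congrFun (congrFun hB' 0) 0
  simp only [mul_apply, transpose_apply, Fin.sum_univ_three, h00, mul_one, one_apply_eq,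
    one_apply_ne, ne_eq, Fin.reduceEq, not_false_eq_true] at col0 col1 col2 col12 row0
  rw [det_fin_three] at hdet
  have h10 : B 1 0 = 0 := by nlinarith
  have h20 : B 2 0 = 0 := by nlinarith
  have h01 : B 0 1 = 0 := by nlinarith
  have h02 : B 0 2 = 0 := by nlinarith
  simp only [h00, h10, h20, h01, h02] at hdet col1 col2 col12
  -- the left-hand side expands to `2 - 2 * det` of the lower right 2 × 2 block
  have hsq : (B 2 2 - B 1 1) ^ 2 + (B 1 2 + B 2 1) ^ 2 = 0 := by
    linear_combination col1 + col2 - 2 * hdet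
  obtain ⟨h22, h12⟩ := (add_eq_zero_iff_of_nonneg (sq_nonneg _) (sq_nonneg _)).mp hsq
  rw [sq_eq_zero_iff, sub_eq_zero] at h22
  rw [sq_eq_zero_iff, add_eq_zero_iff_eq_neg] at h12
  obtain ⟨θ, hθ, hcos, hsin⟩ := exists_polar_coords (B 1 1) (B 2 1)
  rw [show B 1 1 ^ 2 + B 2 1 ^ 2 = 1 by linarith, sqrt_one, one_mul] at hcos hsin
  refine ⟨θ, hθ, ?_⟩
  rw [eta_fin_three B, elemRot23, h00, h10, h20, h01, h02, h22, h12, hcos, hsin]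

/-- generalised Euler angle decomposition: every 3×3 rotation matrix can
be written as `A₁₂(θ₁₂) A₁₃(θ₁₃) A₂₃(θ₂₃)` with `θ₁₂, θ₂₃ ∈ (−π, π]` and
`θ₁₃ ∈ [−π/2, π/2]`. -/
theorem euler_angle_decomposition
    (A : Matrix (Fin 3) (Fin 3) ℝ) (hA : Aᵀ * A = 1) (hdet : A.det = 1) :
    ∃ θ₁₂ θ₁₃ θ₂₃ : ℝ,
      θ₁₂ ∈ Set.Ioc (-π) π ∧ θ₂₃ ∈ Set.Ioc (-π) π ∧
      θ₁₃ ∈ Set.Icc (-(π / 2)) (π / 2) ∧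
      A = elemRot12 θ₁₂ * elemRot13 θ₁₃ * elemRot23 θ₂₃ := by
  have hcol : A 0 0 ^ 2 + A 1 0 ^ 2 + A 2 0 ^ 2 = 1 := by
    simpa [mul_apply, Fin.sum_univ_three, sq] using congrFun (congrFun hA 0) 0
  obtain ⟨a, ha, b, hb, hx, hy, hz⟩ := exists_spherical_coords hcol
  set R := elemRot12 a * elemRot13 b with hRdef
  have hR : R * Rᵀ = 1 := by
    rw [transpose_mul, mul_assoc, ← mul_assoc (elemRot13 b), elemRot13_mul_transpose_self,
      one_mul, elemRot12_mul_transpose_self]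
  have hRcol : ∀ k, R k 0 = A k 0 := by
    intro k
    fin_cases k <;> simp [R, elemRot12, elemRot13, ← hx, ← hy, ← hz]
  obtain ⟨c, hc, hB⟩ := exists_eq_elemRot23 (B := Rᵀ * A)
    (by rw [transpose_mul, transpose_transpose, mul_assoc, ← mul_assoc R, hR, one_mul, hA])
    (by rw [det_mul, det_transpose, hRdef, det_mul, det_elemRot12, det_elemRot13, hdet,
      one_mul, one_mul])
    (by simpa only [mul_apply, transpose_apply, hRcol, one_apply_eq] using
      congrFun (congrFun hA 0) 0)
  refine ⟨a, b, c, ha, hc, hb, ?_⟩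
  rw [← hB, ← mul_assoc, hR, one_mul]
end

section
/- Posterior expected loss decomposition: let π be a probability mass function on the set of m×n matching matrices, and for each pair (j,k) let p_{jk} = Σ_M π(M)·[M_{jk}=1] be the marginal posterior probability of the match (j,k). Let ℓ_{ab} (a,b ∈ {0,1}) be real loss values with Δ := ℓ₁₀ + ℓ₀₁ − ℓ₁₁ − ℓ₀₀ ≠ 0, and set K = (ℓ₀₁ − ℓ₀₀)/Δ. Then for every m×n matrix M̂ with entries in {0,1}, the expected loss Σ_M π(M) Σ_{j=1}^{m} Σ_{k=1}^{n} ℓ_{M_{jk}, M̂_{jk}} equals Σ_{j,k} [p_{jk} ℓ₁₀ + (1 − p_{jk}) ℓ₀₀] − Δ · Σ_{j,k: M̂_{jk}=1} (p_{jk} − K), where the first term does not depend on M̂. -/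
open Finset

/-- An `m × n` matrix of Booleans is a matching matrix if each row and each column
contains at most one `true` (i.e. at most one entry equal to 1). -/
def IsMatchingMatrix {m n : ℕ} (M : Matrix (Fin m) (Fin n) Bool) : Prop :=
  (∀ j : Fin m, (Finset.univ.filter fun k : Fin n => M j k = true).card ≤ 1) ∧
  (∀ k : Fin n, (Finset.univ.filter fun j : Fin m => M j k = true).card ≤ 1)

/-- posterior expected loss decomposition. For a pmf `π` on matching
matrices with marginal match probabilities `p_{jk}`, losses `ℓ_{ab}` (here
`ℓ a b = loss when the truth is `a` and we declare `b`, with `true = 1`),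
`Δ = ℓ₁₀ + ℓ₀₁ − ℓ₁₁ − ℓ₀₀ ≠ 0` and `K = (ℓ₀₁ − ℓ₀₀)/Δ`, the posterior expected loss of
any 0-1 matrix `Mhat` is a constant (not depending on `Mhat`) minus
`Δ · Σ_{j,k : Mhat_{jk}=1} (p_{jk} − K)`. -/
theorem expected_loss_decomposition
    (m n : ℕ) (π : Matrix (Fin m) (Fin n) Bool → ℝ)
    (hπ0 : ∀ M, 0 ≤ π M)
    (hπsupp : ∀ M, ¬ IsMatchingMatrix M → π M = 0)
    (hπ1 : ∑ M : Matrix (Fin m) (Fin n) Bool, π M = 1)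
    (ℓ : Bool → Bool → ℝ)
    (hΔ : ℓ true false + ℓ false true - ℓ true true - ℓ false false ≠ 0)
    (Mhat : Matrix (Fin m) (Fin n) Bool) :
    ∑ M : Matrix (Fin m) (Fin n) Bool, π M * ∑ j : Fin m, ∑ k : Fin n, ℓ (M j k) (Mhat j k)
      = (∑ j : Fin m, ∑ k : Fin n,
          ((∑ M : Matrix (Fin m) (Fin n) Bool, π M * (if M j k then 1 else 0)) * ℓ true false +
            (1 - ∑ M : Matrix (Fin m) (Fin n) Bool, π M * (if M j k then 1 else 0)) *
              ℓ false false))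
        - (ℓ true false + ℓ false true - ℓ true true - ℓ false false) *
          ∑ q ∈ Finset.univ.filter (fun q : Fin m × Fin n => Mhat q.1 q.2 = true),
            ((∑ M : Matrix (Fin m) (Fin n) Bool, π M * (if M q.1 q.2 then 1 else 0)) -
              (ℓ false true - ℓ false false) /
                (ℓ true false + ℓ false true - ℓ true true - ℓ false false)) := by
  set Δ := ℓ true false + ℓ false true - ℓ true true - ℓ false false with hΔdef
  have key : ∀ (j : Fin m) (k : Fin n) (b : Bool),
      ∑ M : Matrix (Fin m) (Fin n) Bool, π M * ℓ (M j k) b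
        = (∑ M : Matrix (Fin m) (Fin n) Bool, π M * (if M j k then 1 else 0)) * ℓ true b +
          (1 - ∑ M : Matrix (Fin m) (Fin n) Bool, π M * (if M j k then 1 else 0)) * ℓ false b := by
    intro j k b
    have h1 : ∀ M : Matrix (Fin m) (Fin n) Bool,
        π M * ℓ (M j k) b = π M * (if M j k then 1 else 0) * ℓ true b +
          (π M - π M * (if M j k then 1 else 0)) * ℓ false b := by
      intro M; cases h : M j k <;> simp [h] <;> ring
    rw [Finset.sum_congr rfl fun M _ => h1 M, Finset.sum_add_distrib,
      ← Finset.sum_mul, ← Finset.sum_mul, Finset.sum_sub_distrib, hπ1]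
  calc ∑ M : Matrix (Fin m) (Fin n) Bool, π M * ∑ j : Fin m, ∑ k : Fin n, ℓ (M j k) (Mhat j k)
      = ∑ j : Fin m, ∑ k : Fin n, ∑ M : Matrix (Fin m) (Fin n) Bool, π M * ℓ (M j k) (Mhat j k) := by
        simp_rw [Finset.mul_sum]
        rw [Finset.sum_comm]
        exact Finset.sum_congr rfl fun j _ => Finset.sum_comm
    _ = _ := by
        rw [Finset.sum_filter, Fintype.sum_prod_type, Finset.mul_sum, ← Finset.sum_sub_distrib]
        refine Finset.sum_congr rfl fun j _ => ?_
        rw [Finset.mul_sum, ← Finset.sum_sub_distrib]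
        refine Finset.sum_congr rfl fun k _ => ?_
        rw [key]
        cases h : Mhat j k <;> simp [h]
        field_simp
        ring
end

section
/- Characterisation of the optimal Bayes estimate of the matching matrix: let π be a probability mass function on the set of m×n matching matrices, with marginal match probabilities p_{jk} = Σ_M π(M)·[M_{jk}=1], let ℓ_{ab} (a,b ∈ {0,1}) be loss values with Δ := ℓ₁₀ + ℓ₀₁ − ℓ₁₁ − ℓ₀₀ > 0 and K = (ℓ₀₁ − ℓ₀₀)/Δ. Then a matching matrix M̂ minimises the posterior expected loss Σ_M π(M) Σ_{j,k} ℓ_{M_{jk}, M̂_{jk}} over all m×n matching matrices if and only if M̂ maximises Σ_{j,k: M̂_{jk}=1} (p_{jk} − K) over all m×n matching matrices. In particular, the optimal estimate depends on the loss values only through the cost ratio K. -/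
open Finset

lemma risk_eq (m n : ℕ) (π : Matrix (Fin m) (Fin n) Bool → ℝ)
    (hπ1 : ∑ M : Matrix (Fin m) (Fin n) Bool, π M = 1)
    (ℓ : Bool → Bool → ℝ)
    (hΔ : 0 < ℓ true false + ℓ false true - ℓ true true - ℓ false false)
    (M' : Matrix (Fin m) (Fin n) Bool) :
    ∑ M : Matrix (Fin m) (Fin n) Bool,
        π M * ∑ j : Fin m, ∑ k : Fin n, ℓ (M j k) (M' j k)
      = (∑ q : Fin m × Fin n, (ℓ false false +
          (∑ M : Matrix (Fin m) (Fin n) Bool, π M * (if M q.1 q.2 then (1:ℝ) else 0))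
            * (ℓ true false - ℓ false false)))
        - (ℓ true false + ℓ false true - ℓ true true - ℓ false false) *
          ∑ q ∈ Finset.univ.filter (fun q : Fin m × Fin n => M' q.1 q.2 = true),
            ((∑ M : Matrix (Fin m) (Fin n) Bool, π M * (if M q.1 q.2 then (1:ℝ) else 0)) -
              (ℓ false true - ℓ false false) /
                (ℓ true false + ℓ false true - ℓ true true - ℓ false false)) := by
  have hΔ' : (ℓ true false + ℓ false true - ℓ true true - ℓ false false) ≠ 0 := ne_of_gt hΔ
  -- rewrite LHS as sum over q of ∑ M
  have h1 : ∀ M : Matrix (Fin m) (Fin n) Bool,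
      (∑ j : Fin m, ∑ k : Fin n, ℓ (M j k) (M' j k))
        = ∑ q : Fin m × Fin n, ℓ (M q.1 q.2) (M' q.1 q.2) := by
    intro M; rw [Fintype.sum_prod_type]
  calc ∑ M : Matrix (Fin m) (Fin n) Bool,
        π M * ∑ j : Fin m, ∑ k : Fin n, ℓ (M j k) (M' j k)
      = ∑ q : Fin m × Fin n, ∑ M : Matrix (Fin m) (Fin n) Bool,
          π M * ℓ (M q.1 q.2) (M' q.1 q.2) := by
        simp_rw [h1, Finset.mul_sum]; rw [Finset.sum_comm]
    _ = ∑ q : Fin m × Fin n,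
          (ℓ false (M' q.1 q.2) +
            (∑ M : Matrix (Fin m) (Fin n) Bool, π M * (if M q.1 q.2 then (1:ℝ) else 0))
              * (ℓ true (M' q.1 q.2) - ℓ false (M' q.1 q.2))) := by
        refine Finset.sum_congr rfl (fun q _ => ?_)
        have : ∀ M : Matrix (Fin m) (Fin n) Bool,
            π M * ℓ (M q.1 q.2) (M' q.1 q.2)
              = π M * ℓ false (M' q.1 q.2) +
                (π M * (if M q.1 q.2 then (1:ℝ) else 0))
                  * (ℓ true (M' q.1 q.2) - ℓ false (M' q.1 q.2)) := by
          intro M; cases h : M q.1 q.2 <;> simp [h] <;> ring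
        simp_rw [this, Finset.sum_add_distrib, ← Finset.sum_mul, hπ1, one_mul]
    _ = _ := by
        have split : ∀ q : Fin m × Fin n,
            (ℓ false (M' q.1 q.2) +
              (∑ M : Matrix (Fin m) (Fin n) Bool, π M * (if M q.1 q.2 then (1:ℝ) else 0))
                * (ℓ true (M' q.1 q.2) - ℓ false (M' q.1 q.2)))
            = (ℓ false false +
                (∑ M : Matrix (Fin m) (Fin n) Bool, π M * (if M q.1 q.2 then (1:ℝ) else 0))
                  * (ℓ true false - ℓ false false))
              + (if M' q.1 q.2 = true then
                  (-(ℓ true false + ℓ false true - ℓ true true - ℓ false false)) *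
                    ((∑ M : Matrix (Fin m) (Fin n) Bool, π M * (if M q.1 q.2 then (1:ℝ) else 0)) -
                      (ℓ false true - ℓ false false) /
                        (ℓ true false + ℓ false true - ℓ true true - ℓ false false))
                 else 0) := by
          intro q
          cases h : M' q.1 q.2 <;> simp [h] <;> field_simp <;> ring
        simp_rw [split, Finset.sum_add_distrib, ← Finset.sum_filter]
        rw [← Finset.mul_sum]
        ring

/-- characterisation of the optimal Bayes estimate of the matching
matrix: a matching matrix `Mhat` minimises the posterior expected (additive) loss over
all matching matrices if and only if it maximises `Σ_{j,k : Mhat_{jk}=1} (p_{jk} − K)`,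
where `p_{jk}` is the marginal posterior probability of the match `(j,k)` and
`K = (ℓ₀₁ − ℓ₀₀)/Δ` with `Δ = ℓ₁₀ + ℓ₀₁ − ℓ₁₁ − ℓ₀₀ > 0`. In particular the optimal
estimate depends on the losses only through `K`. -/
theorem optimal_matching_characterisation
    (m n : ℕ) (π : Matrix (Fin m) (Fin n) Bool → ℝ)
    (hπ0 : ∀ M, 0 ≤ π M)
    (hπsupp : ∀ M, ¬ IsMatchingMatrix M → π M = 0)
    (hπ1 : ∑ M : Matrix (Fin m) (Fin n) Bool, π M = 1)
    (ℓ : Bool → Bool → ℝ)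
    (hΔ : 0 < ℓ true false + ℓ false true - ℓ true true - ℓ false false)
    (Mhat : Matrix (Fin m) (Fin n) Bool) (hMhat : IsMatchingMatrix Mhat) :
    (∀ M' : Matrix (Fin m) (Fin n) Bool, IsMatchingMatrix M' →
        (∑ M : Matrix (Fin m) (Fin n) Bool,
            π M * ∑ j : Fin m, ∑ k : Fin n, ℓ (M j k) (Mhat j k))
          ≤ ∑ M : Matrix (Fin m) (Fin n) Bool,
              π M * ∑ j : Fin m, ∑ k : Fin n, ℓ (M j k) (M' j k))
    ↔
    (∀ M' : Matrix (Fin m) (Fin n) Bool, IsMatchingMatrix M' →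
        (∑ q ∈ Finset.univ.filter (fun q : Fin m × Fin n => M' q.1 q.2 = true),
            ((∑ M : Matrix (Fin m) (Fin n) Bool, π M * (if M q.1 q.2 then 1 else 0)) -
              (ℓ false true - ℓ false false) /
                (ℓ true false + ℓ false true - ℓ true true - ℓ false false)))
          ≤ ∑ q ∈ Finset.univ.filter (fun q : Fin m × Fin n => Mhat q.1 q.2 = true),
              ((∑ M : Matrix (Fin m) (Fin n) Bool, π M * (if M q.1 q.2 then 1 else 0)) -
                (ℓ false true - ℓ false false) /
                  (ℓ true false + ℓ false true - ℓ true true - ℓ false false))) := by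
  constructor
  · intro h M' hM'
    have h2 := h M' hM'
    rw [risk_eq m n π hπ1 ℓ hΔ Mhat, risk_eq m n π hπ1 ℓ hΔ M'] at h2
    set a := ∑ q ∈ Finset.univ.filter (fun q : Fin m × Fin n => M' q.1 q.2 = true),
            ((∑ M : Matrix (Fin m) (Fin n) Bool, π M * (if M q.1 q.2 then (1:ℝ) else 0)) -
              (ℓ false true - ℓ false false) /
                (ℓ true false + ℓ false true - ℓ true true - ℓ false false)) with ha
    set b := ∑ q ∈ Finset.univ.filter (fun q : Fin m × Fin n => Mhat q.1 q.2 = true),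
            ((∑ M : Matrix (Fin m) (Fin n) Bool, π M * (if M q.1 q.2 then (1:ℝ) else 0)) -
              (ℓ false true - ℓ false false) /
                (ℓ true false + ℓ false true - ℓ true true - ℓ false false)) with hb
    have h3 : (ℓ true false + ℓ false true - ℓ true true - ℓ false false) * a
        ≤ (ℓ true false + ℓ false true - ℓ true true - ℓ false false) * b := by linarith
    exact le_of_mul_le_mul_left h3 hΔ
  · intro h M' hM'
    have h2 := h M' hM'
    rw [risk_eq m n π hπ1 ℓ hΔ Mhat, risk_eq m n π hπ1 ℓ hΔ M']
    have h3 := mul_le_mul_of_nonneg_left h2 (le_of_lt hΔ)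
    linarith
end

section
/- Mode of the prior on the number of matches: let m, n ≥ 1 be integers and let L̄ be an integer with 1 ≤ L̄ < min(m,n). Set d = L̄ / ((m−L̄)(n−L̄)) > 0. Then for every integer L with 0 ≤ L ≤ min(m,n), d^L / ((m−L)!(n−L)!L!) ≤ d^{L̄} / ((m−L̄)!(n−L̄)!L̄!), with equality only for L = L̄; that is, the probability distribution p(L) ∝ d^L / ((m−L)!(n−L)!L!) on {0,1,…,min(m,n)} has its unique mode at L̄. -/
noncomputable def priorPF (m n : ℕ) (d : ℝ) (L : ℕ) : ℝ :=
  d ^ L / ((Nat.factorial (m - L)) * (Nat.factorial (n - L)) * (Nat.factorial L))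

lemma priorPF_pos (m n : ℕ) {d : ℝ} (hd : 0 < d) (L : ℕ) : 0 < priorPF m n d L := by
  unfold priorPF
  have h1 := Nat.factorial_pos (m - L)
  have h2 := Nat.factorial_pos (n - L)
  have h3 := Nat.factorial_pos L
  positivity

/-- Fundamental ratio identity. -/
lemma priorPF_step (m n : ℕ) (d : ℝ) (L : ℕ) (hm : L < m) (hn : L < n) :
    priorPF m n d (L + 1) * ((L : ℝ) + 1) =
      priorPF m n d L * (d * ((m - L : ℕ) : ℝ) * ((n - L : ℕ) : ℝ)) := by
  have hm1 : m - L = (m - (L + 1)) + 1 := by omega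
  have hn1 : n - L = (n - (L + 1)) + 1 := by omega
  unfold priorPF
  rw [hm1, hn1]
  simp only [Nat.factorial_succ]
  have e1 : ((Nat.factorial (m - (L+1)) : ℝ)) ≠ 0 := by
    exact_mod_cast (Nat.factorial_pos _).ne'
  have e2 : ((Nat.factorial (n - (L+1)) : ℝ)) ≠ 0 := by
    exact_mod_cast (Nat.factorial_pos _).ne'
  have e3 : ((Nat.factorial L : ℝ)) ≠ 0 := by
    exact_mod_cast (Nat.factorial_pos _).ne'
  push_cast
  field_simp
  ring

lemma priorPF_lt_succ (m n : ℕ) {d : ℝ} (hd : 0 < d) (L : ℕ) (hm : L < m) (hn : L < n)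
    (h : (L : ℝ) + 1 < d * ((m - L : ℕ) : ℝ) * ((n - L : ℕ) : ℝ)) :
    priorPF m n d L < priorPF m n d (L + 1) := by
  have hp := priorPF_pos m n hd L
  have hs := priorPF_step m n d L hm hn
  have hL1 : (0 : ℝ) < (L : ℝ) + 1 := by positivity
  nlinarith [priorPF_pos m n hd (L + 1)]

lemma priorPF_succ_lt (m n : ℕ) {d : ℝ} (hd : 0 < d) (L : ℕ) (hm : L < m) (hn : L < n)
    (h : d * ((m - L : ℕ) : ℝ) * ((n - L : ℕ) : ℝ) < (L : ℝ) + 1) :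
    priorPF m n d (L + 1) < priorPF m n d L := by
  have hp := priorPF_pos m n hd L
  have hs := priorPF_step m n d L hm hn
  have hL1 : (0 : ℝ) < (L : ℝ) + 1 := by positivity
  nlinarith [priorPF_pos m n hd (L + 1)]

lemma chain_up (f : ℕ → ℝ) (a : ℕ) :
    ∀ b, a < b → (∀ k, a ≤ k → k < b → f k < f (k + 1)) → f a < f b := by
  intro b
  induction b with
  | zero => omega
  | succ b ih =>
    intro hab h
    rcases Nat.lt_succ_iff_lt_or_eq.mp hab with h1 | h1
    · exact (ih h1 (fun k hk hk' => h k hk (Nat.lt_succ_of_lt hk'))).trans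
        (h b (le_of_lt h1) (Nat.lt_succ_self b))
    · subst h1; exact h a le_rfl (Nat.lt_succ_self a)

lemma chain_down (f : ℕ → ℝ) (a : ℕ) :
    ∀ b, a < b → (∀ k, a ≤ k → k < b → f (k + 1) < f k) → f b < f a := by
  intro b
  induction b with
  | zero => omega
  | succ b ih =>
    intro hab h
    rcases Nat.lt_succ_iff_lt_or_eq.mp hab with h1 | h1
    · exact lt_trans (h b (le_of_lt h1) (Nat.lt_succ_self b))
        (ih h1 (fun k hk hk' => h k hk (Nat.lt_succ_of_lt hk')))
    · subst h1; exact h a le_rfl (Nat.lt_succ_self a)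

/-- mode of the prior on the number of matches. With
`d = L̄/((m−L̄)(n−L̄))`, the quantities `d^L / ((m−L)!(n−L)!L!)` for
`0 ≤ L ≤ min(m,n)` are maximised uniquely at `L = L̄`; that is, the prior
`p(L) ∝ d^L/((m−L)!(n−L)!L!)` has its unique mode at `L̄`. -/
theorem prior_number_of_matches_mode
    (m n Lbar : ℕ) (hm : 1 ≤ m) (hn : 1 ≤ n) (hLbar : 1 ≤ Lbar) (hLbar' : Lbar < min m n) :
    ∀ L : ℕ, L ≤ min m n →
      ((Lbar : ℝ) / ((m - Lbar) * (n - Lbar))) ^ L /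
          ((Nat.factorial (m - L)) * (Nat.factorial (n - L)) * (Nat.factorial L))
        ≤ ((Lbar : ℝ) / ((m - Lbar) * (n - Lbar))) ^ Lbar /
            ((Nat.factorial (m - Lbar)) * (Nat.factorial (n - Lbar)) * (Nat.factorial Lbar))
      ∧ (L ≠ Lbar →
        ((Lbar : ℝ) / ((m - Lbar) * (n - Lbar))) ^ L /
            ((Nat.factorial (m - L)) * (Nat.factorial (n - L)) * (Nat.factorial L))
          < ((Lbar : ℝ) / ((m - Lbar) * (n - Lbar))) ^ Lbar /
              ((Nat.factorial (m - Lbar)) * (Nat.factorial (n - Lbar)) *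
                (Nat.factorial Lbar))) := by
  have hmL : Lbar < m := lt_of_lt_of_le hLbar' (min_le_left m n)
  have hnL : Lbar < n := lt_of_lt_of_le hLbar' (min_le_right m n)
  set d : ℝ := (Lbar : ℝ) / ((m - Lbar) * (n - Lbar)) with hdDef
  have hcast : ((m : ℝ) - Lbar) * ((n : ℝ) - Lbar)
      = ((m - Lbar : ℕ) : ℝ) * ((n - Lbar : ℕ) : ℝ) := by
    push_cast [Nat.cast_sub hmL.le, Nat.cast_sub hnL.le]
    ring
  have hmLpos : (0 : ℝ) < ((m - Lbar : ℕ) : ℝ) := by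
    exact_mod_cast Nat.sub_pos_of_lt hmL
  have hnLpos : (0 : ℝ) < ((n - Lbar : ℕ) : ℝ) := by
    exact_mod_cast Nat.sub_pos_of_lt hnL
  have hLpos : (0 : ℝ) < (Lbar : ℝ) := by exact_mod_cast hLbar
  have hd : 0 < d := by
    rw [hdDef, hcast]; positivity
  have hde : d * (((m - Lbar : ℕ) : ℝ) * ((n - Lbar : ℕ) : ℝ)) = (Lbar : ℝ) := by
    rw [hdDef, hcast]
    field_simp
  -- strict increase for L < Lbar
  have hup : ∀ k, k < Lbar → priorPF m n d k < priorPF m n d (k + 1) := by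
    intro k hk
    have hkm : k < m := hk.trans hmL
    have hkn : k < n := hk.trans hnL
    apply priorPF_lt_succ m n hd k hkm hkn
    -- (k+1) < d * (m-k) * (n-k)
    -- equivalent in ℕ after multiplying by (m-Lbar)(n-Lbar):
    have hnat : (k + 1) * ((m - Lbar) * (n - Lbar)) < Lbar * ((m - k) * (n - k)) := by
      have h1 : (k + 1) * ((m - Lbar) * (n - Lbar)) ≤ Lbar * ((m - Lbar) * (n - Lbar)) :=
        Nat.mul_le_mul_right _ hk
      have h2 : Lbar * ((m - Lbar) * (n - Lbar)) < Lbar * ((m - k) * (n - k)) := by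
        apply mul_lt_mul_of_pos_left ?_ (show 0 < Lbar by omega)
        calc (m - Lbar) * (n - Lbar) ≤ (m - Lbar) * (n - k) :=
              Nat.mul_le_mul_left _ (by omega)
          _ < (m - k) * (n - k) :=
              mul_lt_mul_of_pos_right (by omega) (by omega)
      omega
    have hreal : ((k : ℝ) + 1) * (((m - Lbar : ℕ) : ℝ) * ((n - Lbar : ℕ) : ℝ))
        < (Lbar : ℝ) * (((m - k : ℕ) : ℝ) * ((n - k : ℕ) : ℝ)) := by
      exact_mod_cast hnat
    rw [← hde] at hreal
    have hpos : (0 : ℝ) < ((m - Lbar : ℕ) : ℝ) * ((n - Lbar : ℕ) : ℝ) := by positivity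
    nlinarith [hreal, hpos]
  -- strict decrease for Lbar ≤ L < min m n
  have hdown : ∀ k, Lbar ≤ k → k < min m n → priorPF m n d (k + 1) < priorPF m n d k := by
    intro k hk hk'
    have hkm : k < m := lt_of_lt_of_le hk' (min_le_left m n)
    have hkn : k < n := lt_of_lt_of_le hk' (min_le_right m n)
    apply priorPF_succ_lt m n hd k hkm hkn
    have hnat : Lbar * ((m - k) * (n - k)) < (k + 1) * ((m - Lbar) * (n - Lbar)) := by
      have h1 : Lbar * ((m - k) * (n - k)) ≤ Lbar * ((m - Lbar) * (n - Lbar)) := by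
        apply Nat.mul_le_mul_left
        apply Nat.mul_le_mul <;> omega
      have h2 : Lbar * ((m - Lbar) * (n - Lbar)) < (k + 1) * ((m - Lbar) * (n - Lbar)) := by
        have hp : 0 < (m - Lbar) * (n - Lbar) := by
          have : 0 < (m - Lbar) := by omega
          have : 0 < (n - Lbar) := by omega
          positivity
        exact mul_lt_mul_of_pos_right (by omega) hp
      omega
    have hreal : (Lbar : ℝ) * (((m - k : ℕ) : ℝ) * ((n - k : ℕ) : ℝ))
        < ((k : ℝ) + 1) * (((m - Lbar : ℕ) : ℝ) * ((n - Lbar : ℕ) : ℝ)) := by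
      exact_mod_cast hnat
    rw [← hde] at hreal
    have hpos : (0 : ℝ) < ((m - Lbar : ℕ) : ℝ) * ((n - Lbar : ℕ) : ℝ) := by positivity
    nlinarith [hreal, hpos]
  intro L hL
  have key : L ≠ Lbar → priorPF m n d L < priorPF m n d Lbar := by
    intro hne
    rcases lt_or_gt_of_ne hne with h | h
    · exact chain_up (priorPF m n d) L Lbar h (fun k hk hk' => hup k hk')
    · exact chain_down (priorPF m n d) Lbar L h
        (fun k hk hk' => hdown k hk (lt_of_lt_of_le hk' hL))
  by_cases hne : L = Lbar
  · subst hne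
    exact ⟨le_refl _, fun h => absurd rfl h⟩
  · exact ⟨(key hne).le, fun _ => key hne⟩
end
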